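/- Let V be a commutative unital C*-algebra. The map α_V sending a projection p ∈ V to the set {λ ∈ Σ_V : λ(p) = 1} is a bijection from the set of projections of V onto the set of clopen subsets of the Gelfand spectrum Σ_V. Moreover, for all projections p, q of V: p ≤ q if and only if α_V(p) ⊆ α_V(q); α_V(pq) = α_V(p) ∩ α_V(q); α_V(p + q − pq) = α_V(p) ∪ α_V(q); and α_V(1 − p) = Σ_V \ α_V(p). -/

import Mathlib

noncomputable section

/-- A projection in a `*`-ring: a self-adjoint idempotent. -/
def IsProjection {M : Type*} [Mul M] [Star M] (p : M) : Prop :=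
  star p = p ∧ p * p = p

/-- The Gelfand spectrum of a commutative unital C*-algebra `V`: the space of characters
`λ : V → ℂ`. -/
abbrev GelfandSpec (V : Type*) [CommCStarAlgebra V] : Type _ := V →ₐ[ℂ] ℂ

/-- The weak-* topology on the Gelfand spectrum (pointwise convergence of characters). -/
instance gelfandSpecTopology (V : Type*) [CommCStarAlgebra V] :
    TopologicalSpace (GelfandSpec V) :=
  TopologicalSpace.induced (fun l : GelfandSpec V => (l : V → ℂ)) Pi.topologicalSpace

/-- The map `α_V` sending a projection `p ∈ V` to the subset
`{λ ∈ Σ_V : λ(p) = 1}` of the Gelfand spectrum. -/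
def alphaMap {V : Type*} [CommCStarAlgebra V] (p : V) : Set (GelfandSpec V) :=
  {l : GelfandSpec V | l p = 1}

/-!
A character takes only the values `0` and `1` on a projection `p`, so `α_V(p)` and its
complement are the preimages of `{1}` and `{0}` under the continuous evaluation at `p`, and the
lattice identities reduce to arithmetic in `{0, 1}`. Since characters separate the points of `V`
(Gelfand duality), `qp = p` can be tested character by character, which gives the order statement
and with it injectivity. For surjectivity, the indicator of a clopen set is a projection of
`C(Σ_V, ℂ)`; pulling it back along the Gelfand transform gives the required projection of `V`.
-/

open WeakDual WeakDual.CharacterSpace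

theorem IsProjection.map {R S F : Type*} [Mul R] [Star R] [Mul S] [Star S] [FunLike F R S]
    [MulHomClass F R S] [StarHomClass F R S] {p : R} (hp : IsProjection p) (f : F) :
    IsProjection (f p) :=
  ⟨by rw [← map_star, hp.1], by rw [← map_mul, hp.2]⟩

theorem IsProjection.map_eq_zero_or_one {R S F : Type*} [Mul R] [Star R] [MonoidWithZero S]
    [IsLeftCancelMulZero S] [FunLike F R S] [MulHomClass F R S] {p : R} (hp : IsProjection p)
    (f : F) : f p = 0 ∨ f p = 1 :=
  IsIdempotentElem.iff_eq_zero_or_one.mp (IsIdempotentElem.map (hp.2 : IsIdempotentElem p) f)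

theorem LocallyConstant.isProjection_charFn {X Y : Type*} [TopologicalSpace X]
    [TopologicalSpace Y] [Semiring Y] [StarRing Y] [ContinuousStar Y] [ContinuousMul Y]
    {U : Set X} (hU : IsClopen U) : IsProjection (charFn Y hU : C(X, Y)) := by
  constructor <;> ext x <;> by_cases hx : x ∈ U <;> simp [coe_charFn, hx]

namespace GelfandSpec

variable {V : Type*} [CommCStarAlgebra V]

theorem continuous_apply (v : V) : Continuous fun l : GelfandSpec V => l v :=
  (_root_.continuous_apply v).comp continuous_induced_dom

theorem continuous_equivAlgHom :
    Continuous (equivAlgHom : characterSpace ℂ V → GelfandSpec V) :=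
  continuous_induced_rng.mpr <|
    continuous_pi fun v => (eval_continuous v).comp continuous_subtype_val

theorem apply_gelfandStarTransform_symm (f : C(characterSpace ℂ V, ℂ)) (l : GelfandSpec V) :
    l ((gelfandStarTransform V).symm f) = f (equivAlgHom.symm l) := by
  conv_rhs => rw [← (gelfandStarTransform V).apply_symm_apply f]
  rfl

theorem eq_of_forall_apply_eq {x y : V} (h : ∀ l : GelfandSpec V, l x = l y) : x = y :=
  (gelfandStarTransform V).injective <| ContinuousMap.ext fun φ => h (equivAlgHom φ)

end GelfandSpec

section alphaMap

variable {V : Type*} [CommCStarAlgebra V] {p q : V}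

@[simp] theorem mem_alphaMap {l : GelfandSpec V} : l ∈ alphaMap p ↔ l p = 1 := Iff.rfl

theorem notMem_alphaMap {l : GelfandSpec V} (hp : IsProjection p) :
    l ∉ alphaMap p ↔ l p = 0 := by
  rcases hp.map_eq_zero_or_one l with h | h <;> simp [h]

theorem isClopen_alphaMap (hp : IsProjection p) : IsClopen (alphaMap p) := by
  have hcompl : (alphaMap p)ᶜ = (fun l : GelfandSpec V => l p) ⁻¹' {0} :=
    Set.ext fun _ => notMem_alphaMap hp
  refine ⟨isClosed_singleton.preimage (GelfandSpec.continuous_apply p), ?_⟩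
  rw [← isClosed_compl_iff, hcompl]
  exact isClosed_singleton.preimage (GelfandSpec.continuous_apply p)

theorem alphaMap_mul (hp : IsProjection p) (q : V) :
    alphaMap (p * q) = alphaMap p ∩ alphaMap q := by
  ext l
  rcases hp.map_eq_zero_or_one l with h | h <;> simp [h]

theorem alphaMap_add_sub_mul (hp : IsProjection p) (q : V) :
    alphaMap (p + q - p * q) = alphaMap p ∪ alphaMap q := by
  ext l
  rcases hp.map_eq_zero_or_one l with h | h <;> simp [h]

theorem alphaMap_one_sub (hp : IsProjection p) : alphaMap (1 - p) = (alphaMap p)ᶜ := by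
  ext l
  rcases hp.map_eq_zero_or_one l with h | h <;> simp [h]

theorem mul_eq_self_iff_alphaMap_subset (hp : IsProjection p) :
    q * p = p ↔ alphaMap p ⊆ alphaMap q := by
  refine ⟨fun h l hl => ?_, fun h => GelfandSpec.eq_of_forall_apply_eq fun l => ?_⟩
  · simpa [mem_alphaMap.mp hl] using congrArg l h
  · rcases hp.map_eq_zero_or_one l with hl | hl
    · simp [hl]
    · simp [hl, mem_alphaMap.mp (h hl)]

theorem eq_of_alphaMap_eq (hp : IsProjection p) (hq : IsProjection q)
    (h : alphaMap p = alphaMap q) : p = q :=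
  calc p = q * p := ((mul_eq_self_iff_alphaMap_subset hp).mpr h.le).symm
    _ = p * q := mul_comm q p
    _ = q := (mul_eq_self_iff_alphaMap_subset hq).mpr h.ge

theorem exists_isProjection_alphaMap_eq {S : Set (GelfandSpec V)} (hS : IsClopen S) :
    ∃ p : V, IsProjection p ∧ alphaMap p = S := by
  have hT : IsClopen (equivAlgHom ⁻¹' S : Set (characterSpace ℂ V)) :=
    hS.preimage GelfandSpec.continuous_equivAlgHom
  refine ⟨(gelfandStarTransform V).symm (LocallyConstant.charFn ℂ hT),
    (LocallyConstant.isProjection_charFn hT).map _, Set.ext fun l => ?_⟩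
  rw [mem_alphaMap, GelfandSpec.apply_gelfandStarTransform_symm]
  simp [LocallyConstant.charFn_eq_one]

end alphaMap

/-- **Statement 17.** For a commutative unital C*-algebra `V`, the map `α_V`,
`p ↦ {λ ∈ Σ_V : λ(p) = 1}`, is a bijection from the set of projections of `V` onto the set of
clopen subsets of the Gelfand spectrum `Σ_V`. Moreover, for projections `p, q`:
`p ≤ q` (i.e. `q p = p`) iff `α_V(p) ⊆ α_V(q)`; `α_V(pq) = α_V(p) ∩ α_V(q)`;
`α_V(p + q - pq) = α_V(p) ∪ α_V(q)`; and `α_V(1 - p) = Σ_V \ α_V(p)`. -/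
theorem alphaMap_bijection_clopen (V : Type*) [CommCStarAlgebra V] :
    -- α_V maps projections to clopen subsets
    (∀ p : V, IsProjection p → IsClopen (alphaMap p)) ∧
    -- injectivity on projections
    (∀ p q : V, IsProjection p → IsProjection q → alphaMap p = alphaMap q → p = q) ∧
    -- surjectivity onto the clopen subsets
    (∀ S : Set (GelfandSpec V), IsClopen S → ∃ p : V, IsProjection p ∧ alphaMap p = S) ∧
    -- order: p ≤ q iff α_V(p) ⊆ α_V(q)
    (∀ p q : V, IsProjection p → IsProjection q → (q * p = p ↔ alphaMap p ⊆ alphaMap q)) ∧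
    -- meets
    (∀ p q : V, IsProjection p → IsProjection q →
      alphaMap (p * q) = alphaMap p ∩ alphaMap q) ∧
    -- joins
    (∀ p q : V, IsProjection p → IsProjection q →
      alphaMap (p + q - p * q) = alphaMap p ∪ alphaMap q) ∧
    -- complements
    (∀ p : V, IsProjection p → alphaMap (1 - p) = (alphaMap p)ᶜ) :=
  ⟨fun _ hp => isClopen_alphaMap hp,
    fun _ _ hp hq => eq_of_alphaMap_eq hp hq,
    fun _ hS => exists_isProjection_alphaMap_eq hS,
    fun _ _ hp _ => mul_eq_self_iff_alphaMap_subset hp,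
    fun _ q hp _ => alphaMap_mul hp q,
    fun _ q hp _ => alphaMap_add_sub_mul hp q,
    fun _ hp => alphaMap_one_sub hp⟩
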